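/- Let (g, ω) be a p-step nilpotent symplectic Novikov Lie algebra of dimension 2n. Then p ≤ dim D(g) + 1 ≤ n + 1, where D(g) = [g,g]. -/

import Mathlib

/-!
The product defined by `ω (x y) z = -ω y ⁅x, z⁆` has `ω`-self-adjoint right multiplications, is
left-symmetric, and has the Lie bracket as its commutator. Dualising, the Novikov identity becomes
`⁅x y, w⁆ = ⁅x, w y⁆`; added to left-symmetry this gives twice the associator, so the product is
associative. Hence `x ⁅y, z⁆ = (x y) z - (x z) y = 0`, and `ω u ⁅c, d⁆ = -ω (c u) d` vanishes for
`u ∈ D(g)`: the derived algebra is isotropic, so `dim D(g) ≤ n`. Finally the lower central series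
decreases strictly until it vanishes, which forces `p - 1 ≤ dim D(g)`.
-/

theorem LinearMap.SeparatingLeft.injective {R M N : Type*} [CommRing R] [AddCommGroup M]
    [Module R M] [AddCommGroup N] [Module R N] {B : M →ₗ[R] N →ₗ[R] R} (hB : B.SeparatingLeft) :
    Function.Injective B :=
  LinearMap.ker_eq_bot.mp (LinearMap.separatingLeft_iff_ker_eq_bot.mp hB)

theorem LinearMap.BilinForm.two_mul_finrank_le_of_le_orthogonal {K V : Type*} [Field K]
    [AddCommGroup V] [Module K V] [FiniteDimensional K V] {B : LinearMap.BilinForm K V}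
    (hB : B.SeparatingLeft) {W : Submodule K V} (hW : W ≤ B.orthogonal W) :
    2 * Module.finrank K W ≤ Module.finrank K V := by
  have h := finrank_add_finrank_orthogonal' (B := B) W
  rw [separatingLeft_iff_ker_eq_bot.mp hB, inf_bot_eq, finrank_bot, add_zero] at h
  have := Submodule.finrank_mono hW
  omega

namespace LieModule

variable {R L M : Type*} [CommRing R] [LieRing L] [LieAlgebra R L] [AddCommGroup M] [Module R M]
  [LieRingModule L M]

theorem lowerCentralSeries_one_le_of_forall_lie_mem [LieModule R L M] {S : Submodule R M}
    (h : ∀ (x : L) (m : M), ⁅x, m⁆ ∈ S) : (lowerCentralSeries R L M 1).toSubmodule ≤ S := by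
  rw [lowerCentralSeries_succ, lowerCentralSeries_zero,
    LieSubmodule.lieIdeal_oper_eq_linear_span', Submodule.span_le]
  rintro _ ⟨x, -, m, -, rfl⟩
  exact h x m

theorem lowerCentralSeries_add_eq_of_succ_eq {k : ℕ}
    (h : lowerCentralSeries R L M (k + 1) = lowerCentralSeries R L M k) (j : ℕ) :
    lowerCentralSeries R L M (k + j) = lowerCentralSeries R L M k := by
  induction j with
  | zero => rfl
  | succ j ih => rw [← add_assoc, lowerCentralSeries_succ, ih, ← lowerCentralSeries_succ, h]

theorem lowerCentralSeries_succ_lt {p k : ℕ} (hp : lowerCentralSeries R L M p = ⊥)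
    (hk : lowerCentralSeries R L M k ≠ ⊥) :
    lowerCentralSeries R L M (k + 1) < lowerCentralSeries R L M k := by
  refine (antitone_lowerCentralSeries R L M k.le_succ).lt_of_ne fun h => hk ?_
  rcases le_total k p with hkp | hpk
  · obtain ⟨j, rfl⟩ := Nat.exists_eq_add_of_le hkp
    rwa [lowerCentralSeries_add_eq_of_succ_eq h] at hp
  · exact eq_bot_iff.mpr (hp ▸ antitone_lowerCentralSeries R L M hpk)

theorem le_finrank_lowerCentralSeries_succ {K : Type*} [Field K] [LieAlgebra K L] [Module K M]
    [FiniteDimensional K M] {p : ℕ} (hp : lowerCentralSeries K L M p = ⊥) (i j : ℕ)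
    (h : lowerCentralSeries K L M (i + j) ≠ ⊥) :
    j ≤ Module.finrank K (lowerCentralSeries K L M (i + 1)) := by
  induction j generalizing i with
  | zero => exact Nat.zero_le _
  | succ j ih =>
    have hne : lowerCentralSeries K L M (i + 1) ≠ ⊥ := fun h' =>
      h (eq_bot_iff.mpr (h' ▸ antitone_lowerCentralSeries K L M (by omega)))
    have hlt := (LieSubmodule.toSubmodule_orderEmbedding K L M).lt_iff_lt.mpr
      (lowerCentralSeries_succ_lt hp hne)
    exact (ih (i + 1) (by rwa [show i + 1 + j = i + (j + 1) by omega])).trans_lt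
      (Submodule.finrank_lt_finrank_of_lt hlt)

end LieModule

namespace SymplecticLieAlgebra

section LeftSymmetric

variable {K L : Type*} [CommRing K] [LieRing L] [LieAlgebra K L]
  {ω : LinearMap.BilinForm K L} {mul : L →ₗ[K] L →ₗ[K] L}

theorem apply_mul_eq_apply_mul (hskew : ∀ x y : L, ω x y = -ω y x)
    (hdef : ∀ x y z : L, ω (mul x y) z = -ω y ⁅x, z⁆) (x y z : L) :
    ω (mul x y) z = ω x (mul z y) := by
  rw [hdef, hskew x, hdef, ← lie_skew, map_neg, neg_neg]

theorem lie_eq_mul_sub_mul (hskew : ∀ x y : L, ω x y = -ω y x) (hnondeg : ω.SeparatingLeft)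
    (hcocycle : ∀ x y z : L, ω ⁅x, y⁆ z + ω ⁅y, z⁆ x + ω ⁅z, x⁆ y = 0)
    (hdef : ∀ x y z : L, ω (mul x y) z = -ω y ⁅x, z⁆) (x y : L) :
    ⁅x, y⁆ = mul x y - mul y x := by
  refine hnondeg.injective (LinearMap.ext fun t => ?_)
  have hc := hcocycle x y t
  rw [← lie_skew t x, map_neg, LinearMap.neg_apply] at hc
  rw [map_sub, LinearMap.sub_apply, hdef, hdef, hskew y, hskew x]
  linear_combination hc

theorem mul_lie_apply (hnondeg : ω.SeparatingLeft)
    (hdef : ∀ x y z : L, ω (mul x y) z = -ω y ⁅x, z⁆) (x y z : L) :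
    mul ⁅x, y⁆ z = mul x (mul y z) - mul y (mul x z) := by
  refine hnondeg.injective (LinearMap.ext fun t => ?_)
  rw [map_sub, LinearMap.sub_apply, hdef, hdef, hdef, hdef, hdef, lie_lie, map_sub]
  ring

theorem lie_mul_eq_lie_mul (hskew : ∀ x y : L, ω x y = -ω y x) (hnondeg : ω.SeparatingLeft)
    (hdef : ∀ x y z : L, ω (mul x y) z = -ω y ⁅x, z⁆)
    (hNov : ∀ x y z : L, mul (mul x y) z = mul (mul x z) y) (x y w : L) :
    ⁅mul x y, w⁆ = ⁅x, mul w y⁆ := by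
  refine hnondeg.injective (LinearMap.ext fun z => ?_)
  rw [hskew, hskew ⁅x, _⁆, ← hdef, ← hdef, hNov, apply_mul_eq_apply_mul hskew hdef (mul x z)]

end LeftSymmetric

section Novikov

variable {K L : Type*} [Field K] [NeZero (2 : K)] [LieRing L] [LieAlgebra K L]
  {ω : LinearMap.BilinForm K L} {mul : L →ₗ[K] L →ₗ[K] L}

theorem mul_assoc_of_novikov (hskew : ∀ x y : L, ω x y = -ω y x) (hnondeg : ω.SeparatingLeft)
    (hcocycle : ∀ x y z : L, ω ⁅x, y⁆ z + ω ⁅y, z⁆ x + ω ⁅z, x⁆ y = 0)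
    (hdef : ∀ x y z : L, ω (mul x y) z = -ω y ⁅x, z⁆)
    (hNov : ∀ x y z : L, mul (mul x y) z = mul (mul x z) y) (x y z : L) :
    mul (mul x y) z = mul x (mul y z) := by
  have hcomm := lie_eq_mul_sub_mul hskew hnondeg hcocycle hdef
  have hleft := mul_lie_apply hnondeg hdef x y z
  have hright := lie_mul_eq_lie_mul hskew hnondeg hdef hNov x z y
  rw [hcomm, map_sub, LinearMap.sub_apply] at hleft
  rw [hcomm, hcomm, hNov x z y, hNov y z x] at hright
  have htwice : (2 : K) • (mul (mul x y) z - mul x (mul y z)) = 0 := by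
    linear_combination (norm := module) hleft + hright
  exact sub_eq_zero.mp ((smul_eq_zero.mp htwice).resolve_left two_ne_zero)

theorem mul_lie_eq_zero (hskew : ∀ x y : L, ω x y = -ω y x) (hnondeg : ω.SeparatingLeft)
    (hcocycle : ∀ x y z : L, ω ⁅x, y⁆ z + ω ⁅y, z⁆ x + ω ⁅z, x⁆ y = 0)
    (hdef : ∀ x y z : L, ω (mul x y) z = -ω y ⁅x, z⁆)
    (hNov : ∀ x y z : L, mul (mul x y) z = mul (mul x z) y) (x y z : L) :
    mul x ⁅y, z⁆ = 0 := by
  have hassoc := mul_assoc_of_novikov hskew hnondeg hcocycle hdef hNov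
  rw [lie_eq_mul_sub_mul hskew hnondeg hcocycle hdef, map_sub, ← hassoc, ← hassoc, hNov, sub_self]

theorem lowerCentralSeries_one_le_orthogonal (hskew : ∀ x y : L, ω x y = -ω y x)
    (hnondeg : ω.SeparatingLeft)
    (hcocycle : ∀ x y z : L, ω ⁅x, y⁆ z + ω ⁅y, z⁆ x + ω ⁅z, x⁆ y = 0)
    (hdef : ∀ x y z : L, ω (mul x y) z = -ω y ⁅x, z⁆)
    (hNov : ∀ x y z : L, mul (mul x y) z = mul (mul x z) y) :
    (LieModule.lowerCentralSeries K L L 1).toSubmodule ≤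
      ω.orthogonal (LieModule.lowerCentralSeries K L L 1).toSubmodule := by
  have hann (x : L) : (LieModule.lowerCentralSeries K L L 1).toSubmodule ≤ LinearMap.ker (mul x) :=
    LieModule.lowerCentralSeries_one_le_of_forall_lie_mem
      (mul_lie_eq_zero hskew hnondeg hcocycle hdef hNov x)
  refine LieModule.lowerCentralSeries_one_le_of_forall_lie_mem fun x y => ?_
  rw [LinearMap.BilinForm.mem_orthogonal_iff]
  intro u hu
  have h := hdef x u y
  rw [LinearMap.mem_ker.mp (hann x hu), map_zero, LinearMap.zero_apply] at h
  exact neg_eq_zero.mp h.symm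

end Novikov

end SymplecticLieAlgebra

theorem snla_stmt_9 (g : Type*) [LieRing g] [LieAlgebra ℝ g]
    [Module.Finite ℝ g] (n p : ℕ)
    (hdim : Module.finrank ℝ g = 2 * n)
    (ω : g →ₗ[ℝ] g →ₗ[ℝ] ℝ)
    (hskew : ∀ x y : g, ω x y = - ω y x)
    (hnondeg : ∀ x : g, (∀ y : g, ω x y = 0) → x = 0)
    (hcocycle : ∀ x y z : g, ω ⁅x, y⁆ z + ω ⁅y, z⁆ x + ω ⁅z, x⁆ y = 0)
    (mul : g →ₗ[ℝ] g →ₗ[ℝ] g)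
    (hdef : ∀ x y z : g, ω (mul x y) z = - ω y ⁅x, z⁆)
    (hNov : ∀ x y z : g, mul (mul x y) z = mul (mul x z) y)
    (hstep : LieModule.lowerCentralSeries ℝ g g p = ⊥)
    (hstep' : LieModule.lowerCentralSeries ℝ g g (p - 1) ≠ ⊥) :
    p ≤ Module.finrank ℝ (LieModule.lowerCentralSeries ℝ g g 1) + 1 ∧
      Module.finrank ℝ (LieModule.lowerCentralSeries ℝ g g 1) + 1 ≤ n + 1 := by
  have hlength : p - 1 ≤ Module.finrank ℝ (LieModule.lowerCentralSeries ℝ g g 1) :=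
    LieModule.le_finrank_lowerCentralSeries_succ hstep 0 (p - 1) (by rwa [zero_add])
  have hisotropic : 2 * Module.finrank ℝ (LieModule.lowerCentralSeries ℝ g g 1) ≤ 2 * n :=
    hdim ▸ LinearMap.BilinForm.two_mul_finrank_le_of_le_orthogonal hnondeg
      (SymplecticLieAlgebra.lowerCentralSeries_one_le_orthogonal hskew hnondeg hcocycle hdef hNov)
  omega
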